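/- arXiv:1506.07949 — 3 statements merged into one kernel-verified Lean document; each statement's English description precedes it below -/
import Mathlib

section
/- Let D be a strong balanced bipartite digraph on 2a vertices. Suppose that d(x) + d(y) ≥ 3a for every dominating pair of vertices {x, y} and for every dominated pair of vertices {x, y} of D. Then D contains a cycle factor. -/
/-- The degree of a vertex `x` in the digraph with arc relation `A`:
number of out-neighbours plus number of in-neighbours. -/
noncomputable def deg {V : Type*} (A : V → V → Prop) (x : V) : ℕ :=
  Nat.card {y : V // A x y} + Nat.card {y : V // A y x}

/-- A digraph is strong if for every ordered pair of vertices there is a directed path. -/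
def IsStrong {V : Type*} (A : V → V → Prop) : Prop :=
  ∀ x y : V, Relation.ReflTransGen A x y

/-- `{x, y}` is a dominating pair: `x ≠ y` and some vertex `z` is dominated by both. -/
def DominatingPair {V : Type*} (A : V → V → Prop) (x y : V) : Prop :=
  x ≠ y ∧ ∃ z, A x z ∧ A y z

/-- `{x, y}` is a dominated pair: `x ≠ y` and some vertex `z` dominates both. -/
def DominatedPair {V : Type*} (A : V → V → Prop) (x y : V) : Prop :=
  x ≠ y ∧ ∃ z, A z x ∧ A z y

/-- `V1`, `V2` form a bipartition of the digraph `A`: every vertex lies in exactly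
one of them and both are independent sets. -/
def IsBipartition {V : Type*} (A : V → V → Prop) (V1 V2 : Finset V) : Prop :=
  (∀ v : V, v ∈ V1 ∨ v ∈ V2) ∧ Disjoint V1 V2 ∧
  (∀ x ∈ V1, ∀ y ∈ V1, ¬ A x y) ∧ (∀ x ∈ V2, ∀ y ∈ V2, ¬ A x y)

/-- A digraph is hamiltonian iff there is a permutation `σ` of the vertices with an arc
from each vertex to its successor, and all vertices lie on one cycle of `σ`. -/
def IsHamiltonian {V : Type*} (A : V → V → Prop) : Prop :=
  ∃ σ : Equiv.Perm V, (∀ v, A v (σ v)) ∧ ∀ v w : V, σ.SameCycle v w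

/-- A digraph has a cycle factor iff there is a permutation `σ` of the vertices with an arc
from each vertex to its successor (the cycles of `σ` are then vertex-disjoint directed
cycles covering all vertices; there are no loops in a bipartite digraph, so no fixed points). -/
def HasCycleFactor {V : Type*} (A : V → V → Prop) : Prop :=
  ∃ σ : Equiv.Perm V, ∀ v, A v (σ v)

/-- A perfect matching from `S` to `T`: a choice, for each vertex of `S`, of an arc
to a vertex of `T`, no two arcs sharing a head. -/
def IsPerfectMatchingFromTo {V : Type*} (A : V → V → Prop) (S T : Finset V) : Prop :=
  ∃ f : V → V, Set.InjOn f ↑S ∧ ∀ x ∈ S, f x ∈ T ∧ A x (f x)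

/-- Isomorphism of digraphs. -/
def DigraphIso {V W : Type*} (A : V → V → Prop) (B : W → W → Prop) : Prop :=
  ∃ e : V ≃ W, ∀ x y : V, A x y ↔ B (e x) (e y)

/-- The digraph `H1`, with `x1 = 0`, `x2 = 1`, `y1 = 2`, `y2 = 3`.
Arcs: `x1 ↔ y1`, `x2 ↔ y1`, `x2 ↔ y2`. -/
def H1Adj : Fin 4 → Fin 4 → Prop := fun i j =>
  (i, j) ∈ ([(0, 2), (2, 0), (1, 2), (2, 1), (1, 3), (3, 1)] : List (Fin 4 × Fin 4))

/-- The digraph `H2` (two variants, indexed by `b : Bool`), with `x1 = 0`, `x2 = 1`,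
`x3 = 2`, `y1 = 3`, `y2 = 4`, `y3 = 5`. Arcs: the 2-cycles `x1 ↔ y1`, `x2 ↔ y1`,
`x3 ↔ y2`, `x3 ↔ y3`, the arcs `y2 → x1`, `y2 → x2`, `y3 → x1`, `y3 → x2`, `y1 → x3`,
and (iff `b = true`) the arc `x3 → y1`. -/
def H2Adj (b : Bool) : Fin 6 → Fin 6 → Prop := fun i j =>
  (i, j) ∈ ([(0, 3), (3, 0), (1, 3), (3, 1), (2, 4), (4, 2), (2, 5), (5, 2),
             (4, 0), (4, 1), (5, 0), (5, 1), (3, 2)] : List (Fin 6 × Fin 6)) ∨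
  (b = true ∧ (i, j) = (2, 3))

/-- The digraph `H3`, with `x1 = 0`, `x2 = 1`, `x3 = 2`, `y1 = 3`, `y2 = 4`, `y3 = 5`.
Arcs: the directed 4-cycle `x1 → y1 → x2 → y2 → x1`, and the 2-cycles
`x3 ↔ y1`, `x3 ↔ y2`, `y3 ↔ x1`, `y3 ↔ x2`. -/
def H3Adj : Fin 6 → Fin 6 → Prop := fun i j =>
  (i, j) ∈ ([(0, 3), (3, 1), (1, 4), (4, 0),
             (2, 3), (3, 2), (2, 4), (4, 2),
             (5, 0), (0, 5), (5, 1), (1, 5)] : List (Fin 6 × Fin 6))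

/-!
A permutation `σ` with `A v (σ v)` for all `v` is the same as a perfect matching from `V1` to
`V2` together with one from `V2` to `V1`, so by Hall's theorem it suffices that every
`S ⊆ V1` has at least `|S|` out-neighbours (and symmetrically). Suppose the out-neighbourhood
`T` of `S` is smaller than `S`. Strong connectivity gives every vertex an out- and an
in-neighbour, so by pigeonhole two vertices of `S` share an out-neighbour; their degrees are at
most `|T| + a`, whence `a ≤ 2|T|`. Likewise `V2 \ T` is larger than `V1 \ S`, which contains all
in-neighbours of `V2 \ T`, so two vertices of `V2 \ T` share an in-neighbour; their degrees are
at most `(a - |S|) + a`, whence `a ≤ 2(a - |S|)`. Together `|S| ≤ |T|`, a contradiction.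
-/

open Finset

section

variable {V : Type*} {A : V → V → Prop}

lemma deg_le_card_add_card {x : V} {T U : Finset V} (hT : ∀ y, A x y → y ∈ T)
    (hU : ∀ y, A y x → y ∈ U) : deg A x ≤ #T + #U := by
  have card_le {p : V → Prop} {s : Finset V} (h : ∀ y, p y → y ∈ s) : Nat.card {y // p y} ≤ #s :=
    (Nat.card_mono s.finite_toSet h).trans_eq (Nat.card_eq_finsetCard s)
  exact add_le_add (card_le hT) (card_le hU)

lemma deg_flip (x : V) : deg (flip A) x = deg A x :=
  add_comm _ _

lemma exists_dominatingPair_deg_add_le {S T U : Finset V} (hout : ∀ x ∈ S, ∃ y, A x y)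
    (hT : ∀ x ∈ S, ∀ y, A x y → y ∈ T) (hU : ∀ x ∈ S, ∀ y, A y x → y ∈ U) (hTS : #T < #S) :
    ∃ x y, DominatingPair A x y ∧ deg A x + deg A y ≤ 2 * (#T + #U) := by
  choose! f hf using hout
  obtain ⟨x, hx, x', hx', hne, hfx⟩ :=
    exists_ne_map_eq_of_card_lt_of_maps_to hTS fun x hx => hT x hx _ (hf x hx)
  refine ⟨x, x', ⟨hne, f x, hf x hx, hfx ▸ hf x' hx'⟩, ?_⟩
  have := deg_le_card_add_card (hT x hx) (hU x hx)
  have := deg_le_card_add_card (hT x' hx') (hU x' hx')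
  omega

lemma exists_dominatedPair_deg_add_le {S T U : Finset V} (hin : ∀ x ∈ S, ∃ y, A y x)
    (hT : ∀ x ∈ S, ∀ y, A y x → y ∈ T) (hU : ∀ x ∈ S, ∀ y, A x y → y ∈ U) (hTS : #T < #S) :
    ∃ x y, DominatedPair A x y ∧ deg A x + deg A y ≤ 2 * (#T + #U) := by
  obtain ⟨x, y, hxy, hdeg⟩ := exists_dominatingPair_deg_add_le (A := flip A) hin hT hU hTS
  exact ⟨x, y, hxy, by simpa only [deg_flip] using hdeg⟩

lemma IsStrong.exists_adj [Nontrivial V] (h : IsStrong A) (x : V) : ∃ y, A x y := by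
  obtain ⟨w, hw⟩ := exists_ne x
  rcases (h x w).cases_head with rfl | ⟨y, hxy, -⟩
  exacts [absurd rfl hw, ⟨y, hxy⟩]

lemma IsStrong.exists_adj' [Nontrivial V] (h : IsStrong A) (x : V) : ∃ y, A y x := by
  obtain ⟨w, hw⟩ := exists_ne x
  rcases (h w x).cases_tail with rfl | ⟨y, -, hyx⟩
  exacts [absurd rfl hw, ⟨y, hyx⟩]

namespace IsBipartition

variable {V1 V2 : Finset V}

lemma symm (h : IsBipartition A V1 V2) : IsBipartition A V2 V1 :=
  ⟨fun v => (h.1 v).symm, h.2.1.symm, h.2.2.2, h.2.2.1⟩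

lemma mem_right_of_adj (h : IsBipartition A V1 V2) {x y : V} (hx : x ∈ V1) (hxy : A x y) :
    y ∈ V2 :=
  (h.1 y).resolve_left fun hy => h.2.2.1 x hx y hy hxy

lemma mem_right_of_adj' (h : IsBipartition A V1 V2) {x y : V} (hx : x ∈ V1) (hyx : A y x) :
    y ∈ V2 :=
  (h.1 y).resolve_left fun hy => h.2.2.1 y hy x hx hyx

lemma finite (h : IsBipartition A V1 V2) : Finite V := by
  classical
  exact Set.finite_univ_iff.mp <| (V1 ∪ V2).finite_toSet.subset fun v _ => by simpa using h.1 v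

lemma hasCycleFactor (h : IsBipartition A V1 V2) (h12 : IsPerfectMatchingFromTo A V1 V2)
    (h21 : IsPerfectMatchingFromTo A V2 V1) : HasCycleFactor A := by
  classical
  obtain ⟨f, hf_inj, hf⟩ := h12
  obtain ⟨g, hg_inj, hg⟩ := h21
  have := h.finite
  have mem_V2 {v : V} (hv : v ∉ V1) : v ∈ V2 := (h.1 v).resolve_left hv
  let σ := (V1 : Set V).piecewise f g
  have hσ : Function.Injective σ := (Set.injective_piecewise_iff _).2
    ⟨hf_inj, hg_inj.mono fun v hv => mem_V2 hv, fun x hx y hy hxy =>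
      disjoint_left.1 h.2.1 (hg y (mem_V2 hy)).1 (hxy ▸ (hf x hx).1)⟩
  refine ⟨Equiv.ofBijective σ (Finite.injective_iff_bijective.1 hσ), fun v => ?_⟩
  by_cases hv : v ∈ V1
  · simpa [σ, hv] using (hf v hv).2
  · simpa [σ, hv] using (hg v (mem_V2 hv)).2

end IsBipartition

lemma isPerfectMatchingFromTo_of_forall_card_le [DecidableEq V] [DecidableRel A]
    {S T : Finset V} (hall : ∀ X ⊆ S, #X ≤ #{y ∈ T | ∃ x ∈ X, A x y}) :
    IsPerfectMatchingFromTo A S T := by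
  obtain ⟨f, hf_inj, hf⟩ :=
    (all_card_le_biUnion_card_iff_exists_injective fun x : S => {y ∈ T | A x y}).1 fun s => by
      refine (card_map _).symm.le.trans <|
        (hall (s.map (.subtype _)) fun x hx => ?_).trans (card_le_card fun y hy => ?_)
      · obtain ⟨x, -, rfl⟩ := mem_map.1 hx
        exact x.2
      · simp only [mem_filter, mem_map, Function.Embedding.coe_subtype] at hy
        obtain ⟨hyT, _, ⟨x, hx, rfl⟩, hxy⟩ := hy
        exact mem_biUnion.2 ⟨x, hx, mem_filter.2 ⟨hyT, hxy⟩⟩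
  refine ⟨fun v => if hv : v ∈ S then f ⟨v, hv⟩ else v, fun v hv w hw hvw => ?_, fun x hx => ?_⟩
  · simp only [mem_coe] at hv hw
    simp only [dif_pos hv, dif_pos hw] at hvw
    exact congrArg Subtype.val (hf_inj hvw)
  · simpa [dif_pos hx] using hf ⟨x, hx⟩

lemma IsBipartition.card_le_card_outNeighbors [DecidableEq V] [DecidableRel A]
    {V1 V2 : Finset V} {a : ℕ} (h : IsBipartition A V1 V2) (hV1 : #V1 = a) (hV2 : #V2 = a)
    (hout : ∀ x, ∃ y, A x y) (hin : ∀ x, ∃ y, A y x)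
    (hdom : ∀ x y : V, DominatingPair A x y → 3 * a ≤ deg A x + deg A y)
    (hdomd : ∀ x y : V, DominatedPair A x y → 3 * a ≤ deg A x + deg A y)
    {S : Finset V} (hS : S ⊆ V1) : #S ≤ #{y ∈ V2 | ∃ x ∈ S, A x y} := by
  set T := {y ∈ V2 | ∃ x ∈ S, A x y}
  by_contra! hTS
  obtain ⟨x, x', hxx', hdeg⟩ := exists_dominatingPair_deg_add_le (T := T) (U := V2) (fun x _ => hout x)
    (fun x hx y hxy => mem_filter.2 ⟨h.mem_right_of_adj (hS hx) hxy, x, hx, hxy⟩)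
    (fun x hx y hyx => h.mem_right_of_adj' (hS hx) hyx) hTS
  have hS_card : #S ≤ a := hV1 ▸ card_le_card hS
  have hsdiff : #(V1 \ S) < #(V2 \ T) := by
    rw [card_sdiff_of_subset hS, card_sdiff_of_subset (show T ⊆ V2 from filter_subset _ _)]
    omega
  obtain ⟨y, y', hyy', hdeg'⟩ := exists_dominatedPair_deg_add_le (U := V1) (fun y _ => hin y)
    (fun y hy x hxy => by
      obtain ⟨hyV2, hyT⟩ := mem_sdiff.1 hy
      exact mem_sdiff.2 ⟨h.symm.mem_right_of_adj' hyV2 hxy,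
        fun hxS => hyT (mem_filter.2 ⟨hyV2, x, hxS, hxy⟩)⟩)
    (fun y hy x hyx => h.symm.mem_right_of_adj (mem_sdiff.1 hy).1 hyx) hsdiff
  have := hdom x x' hxx'
  have := hdomd y y' hyy'
  rw [card_sdiff_of_subset hS] at hdeg'
  omega

end

/-- A strong balanced bipartite digraph on `2a` vertices in which
`d(x) + d(y) ≥ 3a` for every dominating pair and every dominated pair `{x, y}`
contains a cycle factor. -/
theorem stmt_6 {V : Type*} (A : V → V → Prop) (V1 V2 : Finset V) (a : ℕ)
    (hbip : IsBipartition A V1 V2)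
    (hV1 : V1.card = a) (hV2 : V2.card = a)
    (hstrong : IsStrong A)
    (hdom : ∀ x y : V, DominatingPair A x y → 3 * a ≤ deg A x + deg A y)
    (hdomd : ∀ x y : V, DominatedPair A x y → 3 * a ≤ deg A x + deg A y) :
    HasCycleFactor A := by
  classical
  rcases Nat.eq_zero_or_pos a with rfl | ha
  · refine ⟨1, fun v => ?_⟩
    rcases hbip.1 v with hv | hv <;> simp_all
  obtain ⟨v1, hv1⟩ : V1.Nonempty := card_pos.1 (hV1 ▸ ha)
  obtain ⟨v2, hv2⟩ : V2.Nonempty := card_pos.1 (hV2 ▸ ha)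
  have : Nontrivial V := nontrivial_of_ne v1 v2 fun h => disjoint_left.1 hbip.2.1 hv1 (h ▸ hv2)
  have hout := hstrong.exists_adj
  have hin := hstrong.exists_adj'
  exact hbip.hasCycleFactor
    (isPerfectMatchingFromTo_of_forall_card_le fun _ hS =>
      hbip.card_le_card_outNeighbors hV1 hV2 hout hin hdom hdomd hS)
    (isPerfectMatchingFromTo_of_forall_card_le fun _ hS =>
      hbip.symm.card_le_card_outNeighbors hV2 hV1 hout hin hdom hdomd hS)
end

section
/- The digraph H3 is a strong balanced bipartite digraph on 2a = 6 vertices that satisfies the following condition: for every dominating pair of vertices {x, y}, either d(x) ≥ 2a−2 and d(y) ≥ a+1, or d(y) ≥ 2a−2 and d(x) ≥ a+1; nevertheless, H3 contains no hamiltonian cycle. -/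
open Finset Function

theorem deg_eq_card_filter {V : Type*} [Fintype V] (A : V → V → Prop) [DecidableRel A] (x : V) :
    deg A x = #{y | A x y} + #{y | A y x} := by
  simp [deg, Nat.card_eq_fintype_card, Fintype.card_subtype]

open Fin.NatCast in
theorem isStrong_of_closed_walk {V : Type*} {A : V → V → Prop} {n : ℕ} [NeZero n]
    (w : Fin n → V) (hw : Surjective w) (harc : ∀ i, A (w i) (w (i + 1))) : IsStrong A := by
  have reach (i : Fin n) (k : ℕ) : Relation.ReflTransGen A (w i) (w (i + k)) := by
    induction k with
    | zero => simpa using .refl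
    | succ k ih => simpa [add_assoc] using ih.tail (harc (i + k))
  intro x y
  obtain ⟨i, rfl⟩ := hw x
  obtain ⟨j, rfl⟩ := hw y
  simpa using reach i (j - i).val

theorem Equiv.Perm.SameCycle.eq_or_eq_apply_of_apply_apply_eq {α : Type*} [Finite α]
    {σ : Equiv.Perm α} {v u : α} (hvu : σ.SameCycle v u) (h2 : σ (σ v) = v) :
    u = v ∨ u = σ v := by
  obtain ⟨i, -, rfl⟩ := hvu.exists_pow_eq'
  have hper : IsPeriodicPt σ 2 v := h2
  rw [← Equiv.Perm.iterate_eq_pow, ← hper.iterate_mod_apply]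
  rcases Nat.mod_two_eq_zero_or_one i with h | h <;> simp [h]

theorem Equiv.Perm.card_le_two_of_forall_sameCycle {α : Type*} [Fintype α] [DecidableEq α]
    {σ : Equiv.Perm α} (hσ : ∀ v w, σ.SameCycle v w) {v : α} (h2 : σ (σ v) = v) :
    Fintype.card α ≤ 2 :=
  calc Fintype.card α = #(univ : Finset α) := rfl
    _ ≤ #{v, σ v} := card_le_card fun u _ => by
        simpa using (hσ v u).eq_or_eq_apply_of_apply_apply_eq h2
    _ ≤ 2 := card_le_two

instance : DecidableRel H3Adj := fun i j => by unfold H3Adj; infer_instance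

theorem deg_H3Adj (x : Fin 6) : deg H3Adj x = 4 := by
  rw [deg_eq_card_filter]
  revert x
  decide

theorem isStrong_H3Adj : IsStrong H3Adj :=
  isStrong_of_closed_walk ![0, 3, 2, 4, 0, 5, 1, 4] (by decide) (by decide)

theorem H3Adj_exists_apply_apply_eq {σ : Equiv.Perm (Fin 6)} (hσ : ∀ v, H3Adj v (σ v)) :
    ∃ v, σ (σ v) = v := by
  -- exhausts the `2 ^ 6` ways of choosing an out-neighbour of every vertex
  have key : ∀ a₀ ∈ univ.filter (H3Adj 0), ∀ a₁ ∈ univ.filter (H3Adj 1),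
      ∀ a₂ ∈ univ.filter (H3Adj 2), ∀ a₃ ∈ univ.filter (H3Adj 3),
      ∀ a₄ ∈ univ.filter (H3Adj 4), ∀ a₅ ∈ univ.filter (H3Adj 5),
      Injective ![a₀, a₁, a₂, a₃, a₄, a₅] →
        ∃ v, ![a₀, a₁, a₂, a₃, a₄, a₅] (![a₀, a₁, a₂, a₃, a₄, a₅] v) = v := by
    decide
  have hσ_eq : ⇑σ = ![σ 0, σ 1, σ 2, σ 3, σ 4, σ 5] := by
    funext v
    fin_cases v <;> rfl
  rw [hσ_eq]
  exact key _ (by simpa using hσ 0) _ (by simpa using hσ 1) _ (by simpa using hσ 2)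
    _ (by simpa using hσ 3) _ (by simpa using hσ 4) _ (by simpa using hσ 5)
    (hσ_eq ▸ σ.injective)

theorem not_isHamiltonian_H3Adj : ¬ IsHamiltonian H3Adj := by
  rintro ⟨σ, harc, hcycle⟩
  obtain ⟨v, hv⟩ := H3Adj_exists_apply_apply_eq harc
  simpa using Equiv.Perm.card_le_two_of_forall_sameCycle hcycle hv

/-- `H3` is a strong balanced bipartite digraph on `2a = 6` vertices
satisfying the degree condition (`d(x) ≥ 2a−2, d(y) ≥ a+1` or symmetrically) for every
dominating pair, yet it has no hamiltonian cycle. -/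
theorem stmt_9 :
    IsStrong H3Adj ∧
    IsBipartition H3Adj ({0, 1, 2} : Finset (Fin 6)) ({3, 4, 5} : Finset (Fin 6)) ∧
    ({0, 1, 2} : Finset (Fin 6)).card = 3 ∧ ({3, 4, 5} : Finset (Fin 6)).card = 3 ∧
    (∀ x y : Fin 6, DominatingPair H3Adj x y →
      (2 * 3 - 2 ≤ deg H3Adj x ∧ 3 + 1 ≤ deg H3Adj y) ∨
      (2 * 3 - 2 ≤ deg H3Adj y ∧ 3 + 1 ≤ deg H3Adj x)) ∧
    ¬ IsHamiltonian H3Adj := by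
  refine ⟨isStrong_H3Adj, by unfold IsBipartition; decide, rfl, rfl, fun x y _ => ?_,
    not_isHamiltonian_H3Adj⟩
  simp [deg_H3Adj]
end

section
/- The digraph H1 is a strong balanced bipartite digraph on 2a = 4 vertices such that d(x) + d(y) ≥ 3a holds for every dominating pair of vertices {x, y} and for every dominated pair of vertices {x, y}; nevertheless, H1 contains no hamiltonian cycle. (Hence the degree-sum condition d(x)+d(y) ≥ 3a on dominating and dominated pairs does not imply hamiltonicity of a strong balanced bipartite digraph.) -/
/-! Every arc of `H1` is reversed by another, so dominating and dominated pairs coincide: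
they are `{x1, x2}` and `{y1, y2}`, each made of a vertex of degree 2 and one of degree 4.
The vertex `y2` has `x2` as its only in- and out-neighbour, so a hamiltonian cycle would
contain the 2-cycle `x2 y2 x2` and miss `x1`. -/

namespace Equiv.Perm

theorem SameCycle.eq_or_eq_apply_of_apply_apply_eq_s10 {α : Type*} {σ : Perm α} {v u : α}
    (hv : σ (σ v) = v) (h : σ.SameCycle v u) : u = v ∨ u = σ v := by
  obtain ⟨i, rfl⟩ := h
  have hv2 : (σ ^ (2 : ℤ)) v = v := by rwa [zpow_two, mul_apply]
  rw [← Int.emod_add_mul_ediv i 2, zpow_add, zpow_mul, mul_apply,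
    zpow_apply_eq_self_of_apply_eq_self hv2]
  rcases Int.emod_two_eq_zero_or_one i with h | h <;> simp [h]

end Equiv.Perm

section Digraph

open Finset

variable {V : Type*} {A : V → V → Prop}

theorem isStrong_of_reflTransGen_hub (c : V) (hto : ∀ x, Relation.ReflTransGen A x c)
    (hfrom : ∀ x, Relation.ReflTransGen A c x) : IsStrong A :=
  fun x y => (hto x).trans (hfrom y)

theorem dominatedPair_iff_dominatingPair (hA : ∀ x y, A x y → A y x) {x y : V} :
    DominatedPair A x y ↔ DominatingPair A x y := by
  have hA' (a b : V) : A a b ↔ A b a := ⟨hA a b, hA b a⟩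
  simp only [DominatedPair, DominatingPair, hA']

theorem deg_eq_two_mul_card [Fintype V] [DecidableRel A] (hA : ∀ x y, A x y → A y x) (x : V) :
    deg A x = 2 * #{y | A x y} := by
  have hA' (y : V) : A y x ↔ A x y := ⟨hA y x, hA x y⟩
  simp only [deg, Nat.card_eq_fintype_card, hA', Fintype.card_subtype]
  ring

/-- A vertex whose only in- and out-neighbour is `v` forces a hamiltonian cycle to be the
2-cycle through `v` and `w`, which misses any third vertex. -/
theorem not_isHamiltonian_of_pendant {v w u : V} (hout : ∀ z, A w z → z = v)
    (hin : ∀ z, A z w → z = v) (huv : u ≠ v) (huw : u ≠ w) : ¬ IsHamiltonian A := by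
  rintro ⟨σ, hσ, hcycle⟩
  have hwv : σ w = v := hout _ (hσ w)
  have hvw : σ v = w := by
    simpa [hin _ (by simpa using hσ (σ⁻¹ w))] using σ.apply_symm_apply w
  rcases (hcycle v u).eq_or_eq_apply_of_apply_apply_eq_s10 (by rw [hvw, hwv]) with h | h
  · exact huv h
  · exact huw (h.trans hvw)

end Digraph

instance : DecidableRel H1Adj := fun i j => by unfold H1Adj; infer_instance

theorem H1Adj_symm : ∀ x y, H1Adj x y → H1Adj y x := by
  decide

theorem isStrong_H1 : IsStrong H1Adj := by
  have h12 : Relation.ReflTransGen H1Adj 1 2 := .single (by decide)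
  have h21 : Relation.ReflTransGen H1Adj 2 1 := .single (by decide)
  have h13 : Relation.ReflTransGen H1Adj 1 3 := .single (by decide)
  have h31 : Relation.ReflTransGen H1Adj 3 1 := .single (by decide)
  have h02 : Relation.ReflTransGen H1Adj 0 2 := .single (by decide)
  have h20 : Relation.ReflTransGen H1Adj 2 0 := .single (by decide)
  refine isStrong_of_reflTransGen_hub 1 (fun x => ?_) (fun x => ?_) <;> fin_cases x
  exacts [h02.trans h21, .refl, h21, h31, h12.trans h20, .refl, h12, h13]

theorem deg_add_deg_H1_of_dominatingPair {x y : Fin 4} (h : DominatingPair H1Adj x y) :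
    deg H1Adj x + deg H1Adj y = 6 := by
  rw [deg_eq_two_mul_card H1Adj_symm, deg_eq_two_mul_card H1Adj_symm]
  revert x y
  unfold DominatingPair
  decide

theorem not_isHamiltonian_H1 : ¬ IsHamiltonian H1Adj :=
  not_isHamiltonian_of_pendant (v := 1) (w := 3) (u := 0) (by decide) (by decide)
    (by decide) (by decide)

/-- `H1` is a strong balanced bipartite digraph on `2a = 4` vertices with
`d(x) + d(y) ≥ 3a` for every dominating pair and every dominated pair `{x, y}`, yet it
has no hamiltonian cycle. -/
theorem stmt_10 :
    IsStrong H1Adj ∧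
    IsBipartition H1Adj ({0, 1} : Finset (Fin 4)) ({2, 3} : Finset (Fin 4)) ∧
    ({0, 1} : Finset (Fin 4)).card = 2 ∧ ({2, 3} : Finset (Fin 4)).card = 2 ∧
    (∀ x y : Fin 4, DominatingPair H1Adj x y →
      3 * 2 ≤ deg H1Adj x + deg H1Adj y) ∧
    (∀ x y : Fin 4, DominatedPair H1Adj x y →
      3 * 2 ≤ deg H1Adj x + deg H1Adj y) ∧
    ¬ IsHamiltonian H1Adj := by
  refine ⟨isStrong_H1, ⟨by decide, by decide, by decide, by decide⟩, rfl, rfl,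
    fun x y h => (deg_add_deg_H1_of_dominatingPair h).ge,
    fun x y h => (deg_add_deg_H1_of_dominatingPair
      ((dominatedPair_iff_dominatingPair H1Adj_symm).1 h)).ge,
    not_isHamiltonian_H1⟩
end
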